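/- Let G be a finite simple graph, v a vertex of G, and V₁, V₂ ⊆ V(G). Then G is a (v, G[V₁], G[V₂])-pseudo-cograph if and only if the complement Ḡ of G is a (v, Ḡ[V₁], Ḡ[V₂])-pseudo-cograph. In particular, G is a pseudo-cograph if and only if Ḡ is a pseudo-cograph. -/

import Mathlib

/-- A graph is P₄-free (i.e., a cograph) if it has no induced subgraph
isomorphic to the path on four vertices. -/
def IsP4Free {V : Type} (G : SimpleGraph V) : Prop :=
  ¬ Nonempty (SimpleGraph.pathGraph 4 ↪g G)

/-- `G` is a `(v, G[V1], G[V2])`-pseudo-cograph. -/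
def IsPseudoCographAt {V : Type} (G : SimpleGraph V) (v : V) (V1 V2 : Set V) : Prop :=
  V1 ∪ V2 = Set.univ ∧ V1 ∩ V2 = {v} ∧ 1 < V1.ncard ∧ 1 < V2.ncard ∧
  IsP4Free (G.induce V1) ∧ IsP4Free (G.induce V2) ∧
  ((∀ x ∈ V1 \ {v}, ∀ y ∈ V2 \ {v}, G.Adj x y) ∨
   (∀ x ∈ V1 \ {v}, ∀ y ∈ V2 \ {v}, ¬ G.Adj x y))

/-- `G` is a pseudo-cograph. -/
def IsPseudoCograph {V : Type} (G : SimpleGraph V) : Prop :=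
  Nat.card V ≤ 2 ∨ ∃ (v : V) (V1 V2 : Set V), IsPseudoCographAt G v V1 V2

/-! Complementation preserves (P1) trivially, preserves (P2) because `P₄` is self-complementary
(the relabelling `0 1 2 3 ↦ 2 0 3 1` maps its edges onto its non-edges), and swaps the two
alternatives of (P3), since a vertex of `V₁ \ {v}` and one of `V₂ \ {v}` are always distinct. -/

open SimpleGraph

def SimpleGraph.pathGraphFourEmbeddingCompl : pathGraph 4 ↪g (pathGraph 4)ᶜ where
  toFun := ![2, 0, 3, 1]
  inj' := by decide
  map_rel_iff' {a b} := by
    revert a b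
    simp only [pathGraph_adj, Function.Embedding.coeFn_mk, compl_adj]
    decide

theorem IsP4Free.of_compl {V : Type} {G : SimpleGraph V} (h : IsP4Free Gᶜ) : IsP4Free G :=
  fun ⟨e⟩ => h ⟨(Embedding.complEquiv e).comp pathGraphFourEmbeddingCompl⟩

theorem isP4Free_compl_iff {V : Type} {G : SimpleGraph V} : IsP4Free Gᶜ ↔ IsP4Free G :=
  ⟨IsP4Free.of_compl, fun h => IsP4Free.of_compl (by rwa [compl_compl])⟩

theorem SimpleGraph.induce_compl {V : Type*} (G : SimpleGraph V) (s : Set V) :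
    Gᶜ.induce s = (G.induce s)ᶜ := by
  ext a b
  simp [Subtype.coe_inj]

theorem IsPseudoCographAt.compl {V : Type} {G : SimpleGraph V} {v : V} {V1 V2 : Set V}
    (h : IsPseudoCographAt G v V1 V2) : IsPseudoCographAt Gᶜ v V1 V2 := by
  obtain ⟨hunion, hinter, hcard1, hcard2, hfree1, hfree2, hsplit⟩ := h
  have hne : ∀ x ∈ V1 \ {v}, ∀ y ∈ V2 \ {v}, x ≠ y := by
    rintro x ⟨hx1, hxv⟩ y ⟨hy2, -⟩ rfl
    exact hxv (hinter ▸ ⟨hx1, hy2⟩)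
  refine ⟨hunion, hinter, hcard1, hcard2, ?_, ?_, hsplit.symm.imp ?_ ?_⟩
  · rwa [induce_compl, isP4Free_compl_iff]
  · rwa [induce_compl, isP4Free_compl_iff]
  · exact fun hunjoin x hx y hy => (compl_adj G x y).mpr ⟨hne x hx y hy, hunjoin x hx y hy⟩
  · exact fun hjoin x hx y hy hadj => ((compl_adj G x y).mp hadj).2 (hjoin x hx y hy)

theorem isPseudoCographAt_compl_iff {V : Type} {G : SimpleGraph V} {v : V} {V1 V2 : Set V} :
    IsPseudoCographAt Gᶜ v V1 V2 ↔ IsPseudoCographAt G v V1 V2 :=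
  ⟨fun h => by simpa using h.compl, IsPseudoCographAt.compl⟩

theorem isPseudoCograph_compl_iff {V : Type} {G : SimpleGraph V} :
    IsPseudoCograph Gᶜ ↔ IsPseudoCograph G := by
  simp only [IsPseudoCograph, isPseudoCographAt_compl_iff]

theorem pseudoCograph_iff_compl_pseudoCograph_general
    {V : Type} (G : SimpleGraph V) (v : V) (V1 V2 : Set V) :
    (IsPseudoCographAt G v V1 V2 ↔ IsPseudoCographAt Gᶜ v V1 V2) ∧
      (IsPseudoCograph G ↔ IsPseudoCograph Gᶜ) :=
  ⟨isPseudoCographAt_compl_iff.symm, isPseudoCograph_compl_iff.symm⟩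

/-- `G` is a `(v, G[V₁], G[V₂])`-pseudo-cograph iff the complement `Gᶜ` is a
`(v, Gᶜ[V₁], Gᶜ[V₂])`-pseudo-cograph; in particular, `G` is a pseudo-cograph
iff `Gᶜ` is a pseudo-cograph. -/
theorem pseudoCograph_iff_compl_pseudoCograph
    {V : Type} [Fintype V] (G : SimpleGraph V) (v : V) (V1 V2 : Set V) :
    (IsPseudoCographAt G v V1 V2 ↔ IsPseudoCographAt Gᶜ v V1 V2) ∧
      (IsPseudoCograph G ↔ IsPseudoCograph Gᶜ) :=
  pseudoCograph_iff_compl_pseudoCograph_general G v V1 V2
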